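/- Let L be an m×k full-rank matrix over F_q with minimal induced equation length s(L). If B₁ and B₂ are two distinct maximal good sets for L, then |B₁ ∩ B₂| ≤ s(L) − 2. Consequently, every good set is contained in a unique maximal good set. -/

import Mathlib

/-!
Write `V(B)` for the space of equations induced by `L` that are supported in `B`. Rank–nullity
for the deletion of the columns in `B` turns goodness of `B` into `dim V(B) = |B| + 1 - s(L)`,
and a Singleton-type argument gives `dim V(B) ≤ |B| + 1 - s(L)` whenever `s(L) ≤ |B| + 1`.
For good `B₁`, `B₂` with `s(L) ≤ |B₁ ∩ B₂| + 1`, Grassmann's formula applied to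
`V(B₁) + V(B₂) ≤ V(B₁ ∪ B₂)` and `V(B₁) ∩ V(B₂) = V(B₁ ∩ B₂)` then makes `B₁ ∪ B₂` good,
which is impossible for two distinct maximal good sets. Two maximal good sets containing a
good `B` meet in at least `|B| ≥ s(L)` elements, hence coincide.
-/

open scoped BigOperators Classical

/-- The number of nonzero coordinates (support size) of a vector. -/
noncomputable def suppCard {F : Type*} [Field F] {k : ℕ} (v : Fin k → F) : ℕ :=
  (Finset.univ.filter fun j => v j ≠ 0).card

/-- `s(L)`: the minimal support size of a nonzero vector in the row space of `L`,
i.e. the minimal length of an equation induced by `L`. -/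
noncomputable def minLen {F : Type*} [Field F] {m k : ℕ} (L : Matrix (Fin m) (Fin k) F) : ℕ :=
  sInf {c | ∃ v ∈ Submodule.span F (Set.range fun i => L i), v ≠ 0 ∧ suppCard v = c}

/-- The rank of the matrix obtained from `L` by deleting the columns indexed by `B`. -/
noncomputable def delRank {F : Type*} [Field F] [Fintype F] {m k : ℕ}
    (L : Matrix (Fin m) (Fin k) F) (B : Finset (Fin k)) : ℕ :=
  (L.submatrix id (fun j : {j : Fin k // j ∉ B} => (j : Fin k))).rank

/-- `B` is good for `L`: writing `|B| = s(L) + t` with `t ≥ 0`, deleting the columns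
indexed by `B` decreases the rank by exactly `t + 1`. -/
noncomputable def Good {F : Type*} [Field F] [Fintype F] {m k : ℕ}
    (L : Matrix (Fin m) (Fin k) F) (B : Finset (Fin k)) : Prop :=
  minLen L ≤ B.card ∧ delRank L B + (B.card - minLen L + 1) = m

open Finset

section SupportedOn

variable {R ι : Type*} [Semiring R]

noncomputable def supportedOn (B : Finset ι) : Submodule R (ι → R) :=
  LinearMap.ker (LinearMap.funLeft R R ((↑) : {j // j ∉ B} → ι))

theorem mem_supportedOn {B : Finset ι} {v : ι → R} : v ∈ supportedOn B ↔ ∀ j ∉ B, v j = 0 := by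
  simp only [supportedOn, LinearMap.mem_ker, funext_iff, LinearMap.funLeft_apply,
    Pi.zero_apply, Subtype.forall]

theorem supportedOn_mono {B C : Finset ι} (h : B ⊆ C) :
    (supportedOn B : Submodule R (ι → R)) ≤ supportedOn C := fun _ hv =>
  mem_supportedOn.2 fun j hj => mem_supportedOn.1 hv j fun hB => hj (h hB)

theorem supportedOn_inter [DecidableEq ι] (B C : Finset ι) :
    (supportedOn (B ∩ C) : Submodule R (ι → R)) = supportedOn B ⊓ supportedOn C := by
  refine le_antisymm (le_inf (supportedOn_mono inter_subset_left)
    (supportedOn_mono inter_subset_right)) fun v ⟨hB, hC⟩ => mem_supportedOn.2 fun j hj => ?_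
  by_cases hjB : j ∈ B
  · exact mem_supportedOn.1 hC j fun hjC => hj (mem_inter.2 ⟨hjB, hjC⟩)
  · exact mem_supportedOn.1 hB j hjB

end SupportedOn

theorem exists_ne_zero_mem_forall_eq_zero {K ι : Type*} [DivisionRing K] [Finite ι]
    (W : Submodule K (ι → K)) (T : Finset ι) (hT : T.card < Module.finrank K W) :
    ∃ v ∈ W, v ≠ 0 ∧ ∀ j ∈ T, v j = 0 := by
  let restrict : W →ₗ[K] (T → K) :=
    LinearMap.funLeft K K ((↑) : T → ι) ∘ₗ W.subtype
  have hker : LinearMap.ker restrict ≠ ⊥ :=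
    LinearMap.ker_ne_bot_of_finrank_lt (by simpa using hT)
  obtain ⟨⟨v, hvW⟩, hv, hv0⟩ := Submodule.exists_mem_ne_zero_of_ne_bot hker
  refine ⟨v, hvW, by simpa using hv0, fun j hj => ?_⟩
  exact congrFun (LinearMap.mem_ker.1 hv) ⟨j, hj⟩

theorem Submodule.finrank_map_add_finrank_inf_ker {K V V₂ : Type*} [DivisionRing K]
    [AddCommGroup V] [Module K V] [AddCommGroup V₂] [Module K V₂] [FiniteDimensional K V]
    (f : V →ₗ[K] V₂) (W : Submodule K V) :
    Module.finrank K (W.map f) + Module.finrank K ↥(W ⊓ LinearMap.ker f) = Module.finrank K W := by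
  have h := (f.domRestrict W).finrank_range_add_finrank_ker
  have hker : (LinearMap.ker f).comap W.subtype = (W ⊓ LinearMap.ker f).comap W.subtype := by
    rw [Submodule.comap_inf, Submodule.comap_subtype_self, top_inf_eq]
  rwa [LinearMap.range_domRestrict, LinearMap.ker_domRestrict, hker,
    (Submodule.comapSubtypeEquivOfLe inf_le_left).finrank_eq] at h

section GoodSets

variable {F : Type*} [Field F] {m k : ℕ}

noncomputable def supportedRowSpace (L : Matrix (Fin m) (Fin k) F) (B : Finset (Fin k)) :
    Submodule F (Fin k → F) :=
  Submodule.span F (Set.range L.row) ⊓ supportedOn B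

theorem supportedRowSpace_mono (L : Matrix (Fin m) (Fin k) F) {B C : Finset (Fin k)}
    (h : B ⊆ C) : supportedRowSpace L B ≤ supportedRowSpace L C :=
  inf_le_inf_left _ (supportedOn_mono h)

theorem supportedRowSpace_inter (L : Matrix (Fin m) (Fin k) F) (B C : Finset (Fin k)) :
    supportedRowSpace L (B ∩ C) = supportedRowSpace L B ⊓ supportedRowSpace L C := by
  rw [supportedRowSpace, supportedRowSpace, supportedRowSpace, supportedOn_inter,
    inf_inf_distrib_left]

theorem minLen_le_suppCard (L : Matrix (Fin m) (Fin k) F) {v : Fin k → F}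
    (hv : v ∈ Submodule.span F (Set.range L.row)) (hv0 : v ≠ 0) : minLen L ≤ suppCard v :=
  Nat.sInf_le ⟨v, hv, hv0, rfl⟩

theorem suppCard_le_card_of_mem_supportedOn {B : Finset (Fin k)} {v : Fin k → F}
    (hv : v ∈ supportedOn B) : suppCard v ≤ B.card :=
  card_le_card fun j hj => by
    by_contra hjB
    exact (mem_filter.1 hj).2 (mem_supportedOn.1 hv j hjB)

/-- A Singleton-type bound: imposing `r - 1` zero coordinates inside `B` on the `r`-dimensional
space leaves a nonzero equation, of length at most `|B| - r + 1`. -/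
theorem finrank_supportedRowSpace_add_minLen_le (L : Matrix (Fin m) (Fin k) F)
    {B : Finset (Fin k)} (hB : minLen L ≤ B.card + 1) :
    Module.finrank F (supportedRowSpace L B) + minLen L ≤ B.card + 1 := by
  set r := Module.finrank F (supportedRowSpace L B)
  obtain hr | hr := Nat.eq_zero_or_pos r
  · omega
  have hrB : r ≤ B.card := by
    by_contra! hlt
    obtain ⟨v, hv, hv0, hvB⟩ := exists_ne_zero_mem_forall_eq_zero (supportedRowSpace L B) B hlt
    exact hv0 (funext fun j => if hj : j ∈ B then hvB j hj else mem_supportedOn.1 hv.2 j hj)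
  obtain ⟨T, hTB, hT⟩ := exists_subset_card_eq (s := B) (n := r - 1) (by omega)
  obtain ⟨v, hv, hv0, hvT⟩ :=
    exists_ne_zero_mem_forall_eq_zero (supportedRowSpace L B) T (by omega)
  have hvBT : v ∈ supportedOn (B \ T) := mem_supportedOn.2 fun j hj => by
    by_cases hjT : j ∈ T
    · exact hvT j hjT
    · exact mem_supportedOn.1 hv.2 j fun hjB => hj (mem_sdiff.2 ⟨hjB, hjT⟩)
  have := minLen_le_suppCard L hv.1 hv0
  have := suppCard_le_card_of_mem_supportedOn hvBT
  rw [card_sdiff_of_subset hTB, hT] at this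
  omega

variable [Fintype F]

theorem delRank_add_finrank_supportedRowSpace (L : Matrix (Fin m) (Fin k) F) (hrank : L.rank = m)
    (B : Finset (Fin k)) : delRank L B + Module.finrank F (supportedRowSpace L B) = m := by
  have hdel : delRank L B = Module.finrank F ((Submodule.span F (Set.range L.row)).map
      (LinearMap.funLeft F F ((↑) : {j // j ∉ B} → Fin k))) := by
    rw [delRank, Matrix.rank_eq_finrank_span_row, Submodule.map_span, ← Set.range_comp]
    rfl
  rw [hdel, supportedRowSpace, supportedOn, Submodule.finrank_map_add_finrank_inf_ker,
    ← Matrix.rank_eq_finrank_span_row, hrank]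

theorem good_iff (L : Matrix (Fin m) (Fin k) F) (hrank : L.rank = m) (B : Finset (Fin k)) :
    Good L B ↔ minLen L ≤ B.card ∧
      Module.finrank F (supportedRowSpace L B) + minLen L = B.card + 1 := by
  have := delRank_add_finrank_supportedRowSpace L hrank B
  unfold Good
  omega

theorem good_union (L : Matrix (Fin m) (Fin k) F) (hrank : L.rank = m)
    {B₁ B₂ : Finset (Fin k)} (h₁ : Good L B₁) (h₂ : Good L B₂)
    (hinter : minLen L ≤ (B₁ ∩ B₂).card + 1) : Good L (B₁ ∪ B₂) := by
  rw [good_iff L hrank] at h₁ h₂ ⊢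
  have hgrass := Submodule.finrank_sup_add_finrank_inf_eq
    (supportedRowSpace L B₁) (supportedRowSpace L B₂)
  rw [← supportedRowSpace_inter] at hgrass
  have hsup : Module.finrank F ↥(supportedRowSpace L B₁ ⊔ supportedRowSpace L B₂) ≤
      Module.finrank F (supportedRowSpace L (B₁ ∪ B₂)) :=
    Submodule.finrank_mono (sup_le (supportedRowSpace_mono L subset_union_left)
      (supportedRowSpace_mono L subset_union_right))
  have hcard := card_union_add_card_inter B₁ B₂
  have hcard₁ : B₁.card ≤ (B₁ ∪ B₂).card := card_le_card subset_union_left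
  have hI := finrank_supportedRowSpace_add_minLen_le L hinter
  have hU := finrank_supportedRowSpace_add_minLen_le L (B := B₁ ∪ B₂) (by omega)
  omega

theorem card_inter_add_two_le_minLen_of_maximal (L : Matrix (Fin m) (Fin k) F)
    (hrank : L.rank = m) {B₁ B₂ : Finset (Fin k)}
    (h₁ : Good L B₁) (hmax₁ : ∀ C, Good L C → B₁ ⊆ C → C = B₁)
    (h₂ : Good L B₂) (hmax₂ : ∀ C, Good L C → B₂ ⊆ C → C = B₂) (hne : B₁ ≠ B₂) :
    (B₁ ∩ B₂).card + 2 ≤ minLen L := by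
  by_contra! hlt
  have hunion := hmax₁ _ (good_union L hrank h₁ h₂ (by omega)) subset_union_left
  exact hne (hmax₂ B₁ h₁ (union_eq_left.1 hunion))

end GoodSets

/-- two distinct maximal good sets intersect in at most `s(L) - 2` elements;
consequently, every good set is contained in a unique maximal good set. -/
theorem maximal_good_sets_intersection
    {F : Type*} [Field F] [Fintype F] {m k : ℕ} (L : Matrix (Fin m) (Fin k) F)
    (hrank : L.rank = m) :
    (∀ B₁ B₂ : Finset (Fin k),
        Good L B₁ → (∀ C, Good L C → B₁ ⊆ C → C = B₁) →
        Good L B₂ → (∀ C, Good L C → B₂ ⊆ C → C = B₂) →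
        B₁ ≠ B₂ → (B₁ ∩ B₂).card + 2 ≤ minLen L) ∧
    (∀ B : Finset (Fin k), Good L B →
        ∃! M : Finset (Fin k),
          Good L M ∧ (∀ C, Good L C → M ⊆ C → C = M) ∧ B ⊆ M) := by
  refine ⟨fun _ _ => card_inter_add_two_le_minLen_of_maximal L hrank, fun B hB => ?_⟩
  obtain ⟨M, hBM, hM, hMle⟩ := Finite.exists_le_maximal (p := Good L) hB
  have hMmax : ∀ C, Good L C → M ⊆ C → C = M := fun C hC hMC => (hMle hC hMC).antisymm hMC
  refine ⟨M, ⟨hM, hMmax, hBM⟩, fun M' ⟨hM', hM'max, hBM'⟩ => ?_⟩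
  by_contra hne
  have hsmall := card_inter_add_two_le_minLen_of_maximal L hrank hM' hM'max hM hMmax hne
  have hlarge := card_le_card (subset_inter hBM' hBM)
  have hB_card := hB.1
  omega
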